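/- arXiv:1605.09197 — 5 statements merged into one kernel-verified Lean document; each statement's English description precedes it below -/
import Mathlib

section
/- A multi-set of segments of integers m is of Speh type (i.e. m = n + νn for some multi-set n, where ν shifts a segment [a,b] to [a+1,b+1]) if and only if the trivial decomposition of m is relevant to some standard order of m, if and only if the trivial decomposition of m is relevant to every standard order of m. -/
/-- A segment of integers `[a,b] = {a, a+1, ..., b}` with `a ≤ b`. -/
structure Seg where
  a : ℤ
  b : ℤ
  le : a ≤ b

noncomputable instance : DecidableEq Seg := Classical.decEq _

/-- The shift `ν[a,b] = [a+1,b+1]`. -/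
def Seg.nu (Δ : Seg) : Seg := ⟨Δ.a + 1, Δ.b + 1, by have := Δ.le; omega⟩

/-- `Δ ≺ Δ'` : `Δ` precedes `Δ'`. -/
def Seg.prec (Δ Δ' : Seg) : Prop := Δ.a < Δ'.a ∧ Δ.b < Δ'.b ∧ Δ'.a - 1 ≤ Δ.b

/-- A multi-set of segments is of Speh type if `m = n + νn` for some multi-set `n`. -/
def SpehType (m : Multiset Seg) : Prop := ∃ n : Multiset Seg, m = n + n.map Seg.nu

/-- `L` is an order of the multi-set `m` in standard form: `Δ_i ⊀ Δ_j` for `i < j`. -/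
def IsStandardOrder (m : Multiset Seg) (L : List Seg) : Prop :=
  (↑L : Multiset Seg) = m ∧
    ∀ i j : Fin L.length, i < j → ¬ Seg.prec (L.get i) (L.get j)

/-- The trivial decomposition of the ordered multi-set `L` is relevant: there is a
fixed-point-free involution `τ` with `Δ_i = νΔ_{τ(i)}` whenever `i < τ(i)`. -/
def TrivialRelevant (L : List Seg) : Prop :=
  ∃ τ : Fin L.length → Fin L.length, Function.Involutive τ ∧ (∀ i, τ i ≠ i) ∧
    ∀ i, i < τ i → L.get i = (L.get (τ i)).nu

namespace SpehAux

lemma nu_inj : Function.Injective Seg.nu := by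
  rintro ⟨a,b,h⟩ ⟨a',b',h'⟩ e
  simp only [Seg.nu, Seg.mk.injEq] at e ⊢
  omega

lemma nu_ne (Δ : Seg) : Δ.nu ≠ Δ := by
  intro h
  have h2 := congrArg Seg.a h
  simp only [Seg.nu] at h2
  omega

lemma prec_nu (Δ : Seg) : Seg.prec Δ Δ.nu := by
  have := Δ.le
  refine ⟨?_, ?_, ?_⟩ <;> simp [Seg.nu] <;> omega

def Std (L : List Seg) : Prop :=
  ∀ i j : Fin L.length, i < j → ¬ Seg.prec (L.get i) (L.get j)

/-- index embedding skipping 0 and j'+1 -/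
def eIdx (j i : ℕ) : ℕ := if i + 1 < j then i + 1 else i + 2

def dIdx (j k : ℕ) : ℕ := if k < j then k - 1 else k - 2

lemma ed (j k : ℕ) (h0 : 0 < j) (hk0 : k ≠ 0) (hkj : k ≠ j) : eIdx j (dIdx j k) = k := by
  unfold eIdx dIdx; split_ifs <;> omega

lemma de (j i : ℕ) : dIdx j (eIdx j i) = i := by
  unfold eIdx dIdx; split_ifs <;> omega

lemma e_lt (j i len : ℕ) (hj : j < len) (hi : i < len - 2) : eIdx j i < len := by
  unfold eIdx; split_ifs <;> omega

lemma e_ne0 (j i : ℕ) : eIdx j i ≠ 0 := by unfold eIdx; split_ifs <;> omega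

lemma e_nej (j i : ℕ) : eIdx j i ≠ j := by unfold eIdx; split_ifs <;> omega

lemma d_lt (j k len : ℕ) (h0 : 0 < j) (hj : j < len) (hk : k < len) (hk0 : k ≠ 0)
    (hkj : k ≠ j) : dIdx j k < len - 2 := by
  unfold dIdx; split_ifs <;> omega

lemma e_lt_e (j i i' : ℕ) : eIdx j i < eIdx j i' ↔ i < i' := by
  unfold eIdx; split_ifs <;> omega

lemma coe_eraseIdx : ∀ (l : List Seg) (k : ℕ) (h : k < l.length),
    (↑l : Multiset Seg) = l[k] ::ₘ ↑(l.eraseIdx k)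
  | a :: t, 0, _ => by simp
  | a :: t, k+1, h => by
    have ih := coe_eraseIdx t k (by simpa using h)
    simp only [List.eraseIdx_cons_succ, List.getElem_cons_succ, ← Multiset.cons_coe]
    rw [ih, Multiset.cons_swap]

lemma len₂ (L : List Seg) (j' : ℕ) (hj : j' + 1 < L.length) :
    (L.tail.eraseIdx j').length = L.length - 2 := by
  rw [List.length_eraseIdx]
  simp only [List.length_tail]
  split_ifs <;> omega

lemma get₂ (L : List Seg) (j' i : ℕ) (h2 : i < (L.tail.eraseIdx j').length)
    (hL : eIdx (j'+1) i < L.length) :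
    (L.tail.eraseIdx j')[i] = L[eIdx (j'+1) i] := by
  unfold eIdx
  split_ifs with h
  · rw [List.getElem_eraseIdx, dif_pos (show i < j' by omega), List.getElem_tail]
  · rw [List.getElem_eraseIdx, dif_neg (show ¬ i < j' by omega), List.getElem_tail]

lemma coe_surgery (L : List Seg) (j' : ℕ) (hj : j' + 1 < L.length) :
    (↑L : Multiset Seg) =
      L[0]'(by omega) ::ₘ L[j'+1] ::ₘ ↑(L.tail.eraseIdx j') := by
  have h0 : (↑L : Multiset Seg) = L[0]'(by omega) ::ₘ ↑(L.tail) := by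
    have := coe_eraseIdx L 0 (by omega)
    rwa [List.eraseIdx_zero] at this
  have hjt : j' < L.tail.length := by simp [List.length_tail]; omega
  have h1 : (↑L.tail : Multiset Seg) = L.tail[j'] ::ₘ ↑(L.tail.eraseIdx j') :=
    coe_eraseIdx L.tail j' hjt
  rw [h0, h1, List.getElem_tail]

end SpehAux

open SpehAux

/-- A relevant trivial decomposition forces Speh type (no standardness needed). -/
lemma relevant_speh : ∀ (N : ℕ) (L : List Seg), L.length ≤ N → TrivialRelevant L →
    SpehType (↑L : Multiset Seg)
  | 0, L, hN, _ => by
    have : L = [] := List.length_eq_zero_iff.mp (by omega)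
    subst this
    exact ⟨0, by simp⟩
  | N+1, L, hN, ⟨τ, hinv, hfpf, hpair⟩ => by
    rcases Nat.eq_zero_or_pos L.length with h0 | hpos
    · have : L = [] := List.length_eq_zero_iff.mp h0
      subst this
      exact ⟨0, by simp⟩
    · set i0 : Fin L.length := ⟨0, hpos⟩ with hi0
      have hτ0 : 0 < (τ i0).val := by
        rcases Nat.eq_zero_or_pos (τ i0).val with h | h
        · exact absurd (Fin.ext h) (hfpf i0)
        · exact h
      obtain ⟨j', hj'⟩ : ∃ j', (τ i0).val = j' + 1 := ⟨(τ i0).val - 1, by omega⟩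
      have hj : j' + 1 < L.length := hj' ▸ (τ i0).isLt
      set L₂ := L.tail.eraseIdx j' with hL₂
      have hlen₂ : L₂.length = L.length - 2 := len₂ L j' hj
      -- the embedding of indices
      have hememb : ∀ i : Fin L₂.length, eIdx (j'+1) i.val < L.length := fun i =>
        e_lt _ _ _ hj (hlen₂ ▸ i.isLt)
      set τ' : Fin L₂.length → Fin L.length := fun i => τ ⟨eIdx (j'+1) i.val, hememb i⟩
        with hτ'
      have hτ'ne : ∀ i, (τ' i).val ≠ 0 ∧ (τ' i).val ≠ j' + 1 := by
        intro i
        constructor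
        · intro h
          have : τ' i = i0 := Fin.ext h
          have := congrArg τ this
          rw [hinv _] at this
          have := congrArg Fin.val this
          simp only at this
          rw [hj'] at this
          exact e_nej (j'+1) i.val this
        · intro h
          have : τ' i = τ i0 := Fin.ext (by rw [h, hj'])
          have := hinv.injective this
          have := congrArg Fin.val this
          exact e_ne0 (j'+1) i.val this
      set τ₂ : Fin L₂.length → Fin L₂.length := fun i =>
        ⟨dIdx (j'+1) (τ' i).val, by
          rw [hlen₂]
          exact d_lt _ _ _ (by omega) hj (τ' i).isLt (hτ'ne i).1 (hτ'ne i).2⟩ with hτ₂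
      have key : ∀ i : Fin L₂.length, eIdx (j'+1) (τ₂ i).val = (τ' i).val := fun i =>
        ed _ _ (by omega) (hτ'ne i).1 (hτ'ne i).2
      have hτ'τ₂ : ∀ i, τ' (τ₂ i) = ⟨eIdx (j'+1) i.val, hememb i⟩ := by
        intro i
        show τ ⟨eIdx (j'+1) (τ₂ i).val, hememb (τ₂ i)⟩ = _
        rw [show (⟨eIdx (j'+1) (τ₂ i).val, hememb (τ₂ i)⟩ : Fin L.length) = τ' i from
          Fin.ext (key i)]
        exact hinv _
      have hinv₂ : Function.Involutive τ₂ := by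
        intro i
        apply Fin.ext
        show dIdx (j'+1) (τ' (τ₂ i)).val = i.val
        rw [hτ'τ₂ i]
        exact de _ _
      have hfpf₂ : ∀ i, τ₂ i ≠ i := by
        intro i h
        have hv : dIdx (j'+1) (τ' i).val = i.val := congrArg Fin.val h
        have : eIdx (j'+1) (dIdx (j'+1) (τ' i).val) = eIdx (j'+1) i.val := by rw [hv]
        rw [ed _ _ (by omega) (hτ'ne i).1 (hτ'ne i).2] at this
        exact hfpf _ (Fin.ext this)
      have hget₂ : ∀ i : Fin L₂.length, L₂.get i = L.get ⟨eIdx (j'+1) i.val, hememb i⟩ := by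
        intro i
        simp only [List.get_eq_getElem]
        exact get₂ L j' i.val i.isLt (hememb i)
      have hpair₂ : ∀ i, i < τ₂ i → L₂.get i = (L₂.get (τ₂ i)).nu := by
        intro i hlt
        have hlt' : (⟨eIdx (j'+1) i.val, hememb i⟩ : Fin L.length) < τ' i := by
          show eIdx (j'+1) i.val < (τ' i).val
          rw [← key i]
          exact (e_lt_e _ _ _).mpr hlt
        have hp := hpair _ hlt'
        have hτi : τ' i = ⟨eIdx (j'+1) (τ₂ i).val, hememb (τ₂ i)⟩ := Fin.ext (key i).symm
        rw [hget₂ i, hget₂ (τ₂ i), ← hτi]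
        exact hp
      have hrec : SpehType (↑L₂ : Multiset Seg) :=
        relevant_speh N L₂ (by omega) ⟨τ₂, hinv₂, hfpf₂, hpair₂⟩
      obtain ⟨n', hn'⟩ := hrec
      have hsurj : (↑L : Multiset Seg) = L[0]'(by omega) ::ₘ L[j'+1] ::ₘ ↑L₂ :=
        coe_surgery L j' hj
      have h00 : L.get i0 = (L.get (τ i0)).nu := hpair i0 (by show 0 < (τ i0).val; omega)
      have hLj : L.get (τ i0) = L[j'+1] := by
        rw [show τ i0 = ⟨j'+1, hj⟩ from Fin.ext hj']
        simp [List.get_eq_getElem]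
      have hL0 : L[0]'(by omega) = (L[j'+1]).nu := by
        rw [← hLj]
        exact h00
      refine ⟨L[j'+1] ::ₘ n', ?_⟩
      rw [hsurj, hn', hL0]
      simp only [Multiset.map_cons, Multiset.cons_add, Multiset.add_cons]

/-- Speh type plus standardness implies the trivial decomposition is relevant. -/
lemma speh_relevant : ∀ (N : ℕ) (L : List Seg) (n : Multiset Seg), L.length ≤ N →
    Std L → (↑L : Multiset Seg) = n + n.map Seg.nu → TrivialRelevant L
  | 0, L, n, hN, _, _ => by
    have : L = [] := List.length_eq_zero_iff.mp (by omega)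
    subst this
    exact ⟨id, fun i => rfl, fun i => i.elim0, fun i => i.elim0⟩
  | N+1, L, n, hN, hstd, hm => by
    rcases Nat.eq_zero_or_pos L.length with h0 | hpos
    · have : L = [] := List.length_eq_zero_iff.mp h0
      subst this
      exact ⟨id, fun i => rfl, fun i => i.elim0, fun i => i.elim0⟩
    -- Step 1: ν L[0] is not in L
    have hnmem : (L[0]'hpos).nu ∉ L := by
      intro hmem
      obtain ⟨k, hk, hkeq⟩ := List.mem_iff_getElem.mp hmem
      have hk0 : 0 < k := by
        rcases Nat.eq_zero_or_pos k with h | h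
        · exfalso; subst h; exact nu_ne _ hkeq.symm
        · exact h
      refine hstd ⟨0, hpos⟩ ⟨k, hk⟩ hk0 ?_
      simp only [List.get_eq_getElem, hkeq]
      exact prec_nu _
    -- Step 2: L[0] ∉ n
    have hcount : Multiset.count (L[0]'hpos).nu (↑L : Multiset Seg) = 0 :=
      Multiset.count_eq_zero.mpr (by simpa using hnmem)
    rw [hm, Multiset.count_add] at hcount
    have hcm : Multiset.count ((L[0]'hpos).nu) (n.map Seg.nu) =
        Multiset.count (L[0]'hpos) n := Multiset.count_map_eq_count' Seg.nu n nu_inj _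
    have hL0n : L[0]'hpos ∉ n := by
      rw [hcm] at hcount
      exact Multiset.count_eq_zero.mp (by omega)
    -- Step 3: L[0] = ν Δ with Δ ∈ n
    have hL0L : L[0]'hpos ∈ (↑L : Multiset Seg) := by
      simp only [Multiset.mem_coe]
      exact List.getElem_mem hpos
    rw [hm, Multiset.mem_add] at hL0L
    have hL0map : L[0]'hpos ∈ n.map Seg.nu := hL0L.resolve_left hL0n
    obtain ⟨Δ, hΔn, hΔ⟩ := Multiset.mem_map.mp hL0map
    -- Step 4: Δ occurs at some index j'+1 in L
    have hΔL : Δ ∈ L := by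
      have : Δ ∈ (↑L : Multiset Seg) := by
        rw [hm, Multiset.mem_add]; exact Or.inl hΔn
      simpa using this
    obtain ⟨j, hjlt, hjeq⟩ := List.mem_iff_getElem.mp hΔL
    have hjpos : 0 < j := by
      rcases Nat.eq_zero_or_pos j with h | h
      · exfalso; subst h; rw [hjeq] at hΔ; exact nu_ne Δ hΔ
      · exact h
    obtain ⟨j', rfl⟩ : ∃ j'', j = j'' + 1 := ⟨j - 1, by omega⟩
    have hj : j' + 1 < L.length := hjlt
    set L₂ := L.tail.eraseIdx j' with hL₂def
    have hlen₂ : L₂.length = L.length - 2 := len₂ L j' hj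
    have hememb : ∀ i : Fin L₂.length, eIdx (j'+1) i.val < L.length := fun i =>
      e_lt _ _ _ hj (by have := i.isLt; omega)
    have hgetL2 : ∀ i : Fin L₂.length, L₂.get i = L.get ⟨eIdx (j'+1) i.val, hememb i⟩ := by
      intro i
      simp only [List.get_eq_getElem]
      exact get₂ L j' i.val i.isLt (hememb i)
    -- Step 5: multiset of L₂
    have hsurj : (↑L : Multiset Seg) = L[0]'hpos ::ₘ L[j'+1] ::ₘ ↑L₂ := coe_surgery L j' hj
    have hn : n = Δ ::ₘ n.erase Δ := (Multiset.cons_erase hΔn).symm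
    have hstep : n + n.map Seg.nu =
        Δ.nu ::ₘ Δ ::ₘ (n.erase Δ + (n.erase Δ).map Seg.nu) := by
      conv_lhs => rw [hn]
      simp only [Multiset.map_cons, Multiset.cons_add, Multiset.add_cons]
    have hcc : Δ.nu ::ₘ Δ ::ₘ (↑L₂ : Multiset Seg) =
        Δ.nu ::ₘ Δ ::ₘ (n.erase Δ + (n.erase Δ).map Seg.nu) := by
      rw [← hstep, ← hm, hsurj, ← hΔ, hjeq]
    have hL₂m : (↑L₂ : Multiset Seg) = n.erase Δ + (n.erase Δ).map Seg.nu :=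
      (Multiset.cons_inj_right _).mp ((Multiset.cons_inj_right _).mp hcc)
    -- Step 6: L₂ is standard
    have hstd₂ : Std L₂ := by
      intro i k hik hprec
      rw [hgetL2 i, hgetL2 k] at hprec
      exact hstd ⟨eIdx (j'+1) i.val, hememb i⟩ ⟨eIdx (j'+1) k.val, hememb k⟩
        ((e_lt_e _ _ _).mpr hik) hprec
    -- Step 7: induction
    obtain ⟨τ₂, hinv₂, hfpf₂, hpair₂⟩ :=
      speh_relevant N L₂ (n.erase Δ) (by omega) hstd₂ hL₂m
    -- Step 8: lift the involution
    have hd : ∀ k : Fin L.length, k.val ≠ 0 → k.val ≠ j'+1 →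
        dIdx (j'+1) k.val < L₂.length := fun k h1 h2 => by
      rw [hlen₂]; exact d_lt _ _ _ (by omega) hj k.isLt h1 h2
    set g : ∀ k : Fin L.length, k.val ≠ 0 → k.val ≠ j'+1 → Fin L.length := fun k h1 h2 =>
      ⟨eIdx (j'+1) (τ₂ ⟨dIdx (j'+1) k.val, hd k h1 h2⟩).val, hememb _⟩ with hgdef
    have hgval : ∀ k h1 h2, (g k h1 h2).val =
        eIdx (j'+1) (τ₂ ⟨dIdx (j'+1) k.val, hd k h1 h2⟩).val := fun _ _ _ => rfl
    have hg0 : ∀ k h1 h2, (g k h1 h2).val ≠ 0 := fun k h1 h2 => e_ne0 _ _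
    have hgj : ∀ k h1 h2, (g k h1 h2).val ≠ j'+1 := fun k h1 h2 => e_nej _ _
    set τ : Fin L.length → Fin L.length := fun k =>
      if hk0 : k.val = 0 then ⟨j'+1, hj⟩
      else if hkj : k.val = j'+1 then ⟨0, hpos⟩
      else g k hk0 hkj with hτdef
    have hτ0 : τ ⟨0, hpos⟩ = ⟨j'+1, hj⟩ := by rw [hτdef]; dsimp only; rw [dif_pos rfl]
    have hτj : τ ⟨j'+1, hj⟩ = ⟨0, hpos⟩ := by
      rw [hτdef]; dsimp only; rw [dif_neg (by omega), dif_pos rfl]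
    have hτg : ∀ (k : Fin L.length) h1 h2, τ k = g k h1 h2 := by
      intro k h1 h2; rw [hτdef]; dsimp only; rw [dif_neg h1, dif_neg h2]
    have hgg : ∀ k h1 h2, g (g k h1 h2) (hg0 k h1 h2) (hgj k h1 h2) = k := by
      intro k h1 h2
      apply Fin.ext
      rw [hgval _ (hg0 k h1 h2) (hgj k h1 h2)]
      have hfin : (⟨dIdx (j'+1) (g k h1 h2).val, hd _ (hg0 k h1 h2) (hgj k h1 h2)⟩ :
          Fin L₂.length) = τ₂ ⟨dIdx (j'+1) k.val, hd k h1 h2⟩ := by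
        apply Fin.ext
        show dIdx (j'+1) (g k h1 h2).val = _
        rw [hgval k h1 h2]; exact de _ _
      rw [hfin, hinv₂ _]
      exact ed _ _ (by omega) h1 h2
    refine ⟨τ, ?_, ?_, ?_⟩
    · intro k
      by_cases h1 : k.val = 0
      · rw [show k = ⟨0, hpos⟩ from Fin.ext h1, hτ0, hτj]
      · by_cases h2 : k.val = j'+1
        · rw [show k = ⟨j'+1, hj⟩ from Fin.ext h2, hτj, hτ0]
        · rw [hτg k h1 h2, hτg _ (hg0 k h1 h2) (hgj k h1 h2), hgg k h1 h2]
    · intro k h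
      by_cases h1 : k.val = 0
      · rw [show k = ⟨0, hpos⟩ from Fin.ext h1, hτ0] at h
        have := congrArg Fin.val h
        simp only at this
        omega
      · by_cases h2 : k.val = j'+1
        · rw [show k = ⟨j'+1, hj⟩ from Fin.ext h2, hτj] at h
          have := congrArg Fin.val h
          simp only at this
          omega
        · rw [hτg k h1 h2] at h
          have hv : dIdx (j'+1) (g k h1 h2).val = dIdx (j'+1) k.val := by rw [h]
          rw [hgval k h1 h2, de] at hv
          exact hfpf₂ ⟨dIdx (j'+1) k.val, hd k h1 h2⟩ (Fin.ext hv)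
    · intro k hlt
      by_cases h1 : k.val = 0
      · rw [show k = ⟨0, hpos⟩ from Fin.ext h1, hτ0]
        simp only [List.get_eq_getElem]
        rw [hjeq, ← hΔ]
      · by_cases h2 : k.val = j'+1
        · exfalso
          rw [show k = ⟨j'+1, hj⟩ from Fin.ext h2, hτj] at hlt
          rw [Fin.lt_def] at hlt
          simp only at hlt
          omega
        · rw [hτg k h1 h2] at hlt ⊢
          have hk : eIdx (j'+1) (dIdx (j'+1) k.val) = k.val := ed _ _ (by omega) h1 h2
          have hlt2 : (⟨dIdx (j'+1) k.val, hd k h1 h2⟩ : Fin L₂.length) <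
              τ₂ ⟨dIdx (j'+1) k.val, hd k h1 h2⟩ := by
            rw [Fin.lt_def]
            apply (e_lt_e (j'+1) _ _).mp
            rw [hk, ← hgval k h1 h2]
            exact hlt
          have hp := hpair₂ _ hlt2
          have e1 : L.get k = L₂.get ⟨dIdx (j'+1) k.val, hd k h1 h2⟩ := by
            rw [hgetL2]
            exact congrArg L.get (Fin.ext hk.symm)
          have e2 : L.get (g k h1 h2) = L₂.get (τ₂ ⟨dIdx (j'+1) k.val, hd k h1 h2⟩) := by
            rw [hgetL2]
          rw [e1, e2]
          exact hp

/-- Every multiset of segments has a standard order. -/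
lemma exists_standard (m : Multiset Seg) : ∃ L, IsStandardOrder m L := by
  classical
  set le : Seg → Seg → Bool := fun Δ Δ' => decide (Δ'.a ≤ Δ.a) with hle
  refine ⟨m.toList.mergeSort le, ?_, ?_⟩
  · have h1 : (m.toList.mergeSort le).Perm m.toList := List.mergeSort_perm m.toList le
    calc ((m.toList.mergeSort le : List Seg) : Multiset Seg)
        = ↑m.toList := Multiset.coe_eq_coe.mpr h1
      _ = m := Multiset.coe_toList m
  · have hsorted := List.pairwise_mergeSort (le := le)
      (fun a b c hab hbc => by simp only [hle, decide_eq_true_eq] at *; omega)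
      (fun a b => by simp only [hle, Bool.or_eq_true, decide_eq_true_eq]; omega) m.toList
    have hp := List.pairwise_iff_get.mp hsorted
    intro i j hij hprec
    have h := hp i j hij
    simp only [hle, decide_eq_true_eq] at h
    have := hprec.1
    omega


/-- `m` is of Speh type iff the trivial decomposition is relevant to some
standard order of `m`, iff it is relevant to every standard order of `m`. -/
theorem speh_iff_trivial_relevant (m : Multiset Seg) :
    (SpehType m ↔ ∃ L : List Seg, IsStandardOrder m L ∧ TrivialRelevant L) ∧
    (SpehType m ↔ ∀ L : List Seg, IsStandardOrder m L → TrivialRelevant L) := by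
  have hA : SpehType m → ∀ L, IsStandardOrder m L → TrivialRelevant L := by
    rintro ⟨n, rfl⟩ L ⟨hLm, hstd⟩
    exact speh_relevant L.length L n le_rfl hstd (by rw [hLm])
  have hB : (∃ L, IsStandardOrder m L ∧ TrivialRelevant L) → SpehType m := by
    rintro ⟨L, ⟨hLm, -⟩, hrel⟩
    have := relevant_speh L.length L le_rfl hrel
    rwa [hLm] at this
  obtain ⟨L0, hL0⟩ := exists_standard m
  exact ⟨⟨fun h => ⟨L0, hL0, hA h L0 hL0⟩, hB⟩,
    ⟨fun h L hL => hA h L hL, fun h => hB ⟨L0, hL0, h L0 hL0⟩⟩⟩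
end

section
/- Let m = {Δ_1, ..., Δ_k} be an ordered multi-set of segments of integers with a decomposition indexed by 𝔍 = {(i,j) : 1 ≤ i ≤ k, 1 ≤ j ≤ k_i}, and let τ be an involution on 𝔍 satisfying (a) τ(i,j+1) ≪ τ(i,j) for all i and 1 ≤ j ≤ k_i − 1 (where (i,j) ≪ (i',j') means i < i'), and (b) τ(ι) ≠ ι for all ι ∈ 𝔍. Then there exist indices i_1 > i_2 > ... > i_{k_1} > 1 such that τ(1,j) = (i_j, k_{i_j}) for all j = 1, ..., k_1. -/
/-- for a decomposition of an ordered multi-set `{Δ_1,...,Δ_k}` with index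
set `𝔍 = Σ i : Fin k, Fin (κ i)` and an involution `τ` on `𝔍` such that
`τ(i,j+1) ≪ τ(i,j)` (first coordinates strictly decrease) and `τ` is fixed-point-free,
there are indices `i_1 > ... > i_{k_1} > 1` (here 0-indexed: `f` strictly decreasing with
values `> 0`) such that `τ(1,j) = (i_j, k_{i_j})` (the last entry of row `i_j`). -/
theorem first_row_to_row_ends
    (k : ℕ) (hk : 0 < k) (κ : Fin k → ℕ) (hκ : ∀ i, 0 < κ i)
    (τ : (Σ i : Fin k, Fin (κ i)) → Σ i : Fin k, Fin (κ i))
    (hinv : Function.Involutive τ)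
    (hfix : ∀ ι, τ ι ≠ ι)
    (hflip : ∀ (i : Fin k) (j : ℕ) (h1 : j < κ i) (h2 : j + 1 < κ i),
      ((τ ⟨i, ⟨j + 1, h2⟩⟩).1 : ℕ) < ((τ ⟨i, ⟨j, h1⟩⟩).1 : ℕ)) :
    ∃ f : Fin (κ ⟨0, hk⟩) → Fin k, StrictAnti f ∧ (∀ j, 0 < (f j : ℕ)) ∧
      ∀ j, τ ⟨⟨0, hk⟩, j⟩ = ⟨f j, ⟨κ (f j) - 1, by have := hκ (f j); omega⟩⟩ := by
  set zi : Fin k := ⟨0, hk⟩ with hzi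
  -- strict decrease of first coordinate along any row
  have mono : ∀ (i : Fin k) (j1 j2 : ℕ) (h1 : j1 < κ i) (h2 : j2 < κ i), j1 < j2 →
      ((τ ⟨i, ⟨j2, h2⟩⟩).1 : ℕ) < ((τ ⟨i, ⟨j1, h1⟩⟩).1 : ℕ) := by
    intro i j1 j2
    induction j2 with
    | zero => intro _ _ h; omega
    | succ n ih =>
      intro h1 h2 hlt
      rcases Nat.lt_or_ge j1 n with h | h
      · exact lt_trans (hflip i n (by omega) h2) (ih h1 (by omega) h)
      · have hn : j1 = n := by omega
        subst hn
        exact hflip i j1 h1 h2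
  -- first coordinate of τ on row 0 is nonzero
  have hne0 : ∀ j : Fin (κ zi), ((τ ⟨zi, j⟩).1 : ℕ) ≠ 0 := by
    intro j h0
    rcases hh : τ ⟨zi, j⟩ with ⟨i, j'⟩
    rw [hh] at h0
    have hi0 : i = zi := Fin.ext h0
    subst hi0
    have hinvj : τ ⟨zi, j'⟩ = ⟨zi, j⟩ := by rw [← hh]; exact hinv _
    rcases lt_trichotomy (j : ℕ) (j' : ℕ) with h | h | h
    · have := mono zi j j' j.2 j'.2 h
      simp only [Fin.eta] at this
      rw [hinvj, hh] at this
      simp at this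
    · have : j = j' := Fin.ext h
      subst this
      exact hfix _ hh
    · have := mono zi j' j j'.2 j.2 h
      simp only [Fin.eta] at this
      rw [hinvj, hh] at this
      simp at this
  -- τ sends row 0 to row ends
  have hlast : ∀ j : Fin (κ zi), ((τ ⟨zi, j⟩).2 : ℕ) = κ (τ ⟨zi, j⟩).1 - 1 := by
    intro j
    rcases hh : τ ⟨zi, j⟩ with ⟨i, j2⟩
    simp only
    by_contra hcon
    have h2 : (j2 : ℕ) + 1 < κ i := by have := j2.2; omega
    have hinvj : τ ⟨i, j2⟩ = ⟨zi, j⟩ := by rw [← hh]; exact hinv _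
    have := hflip i j2 j2.2 h2
    simp only [Fin.eta] at this
    rw [hinvj] at this
    simp [hzi] at this
  refine ⟨fun j => (τ ⟨zi, j⟩).1, ?_, ?_, ?_⟩
  · intro j1 j2 hlt
    have := mono zi j1 j2 j1.2 j2.2 hlt
    simp only [Fin.eta] at this
    exact this
  · intro j
    have := hne0 j
    show 0 < ((τ ⟨zi, j⟩).1 : ℕ)
    omega
  · have key : ∀ (ι : Σ i : Fin k, Fin (κ i)) (h : (ι.2 : ℕ) = κ ι.1 - 1)
        (h2 : κ ι.1 - 1 < κ ι.1), ι = ⟨ι.1, ⟨κ ι.1 - 1, h2⟩⟩ := by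
      rintro ⟨i, j2⟩ h h2
      exact congrArg (Sigma.mk i) (Fin.ext h)
    intro j
    exact key _ (hlast j) (by have := hκ (τ ⟨zi, j⟩).1; omega)
end

section
/- Let ℓ ∈ ℕ and let m be a multi-set of segments of integers all of length ℓ. Let Δ be minimal in m with respect to the order ≤_b, and write m = Σ_{n=0}^N a_n {ν^n Δ} with a_0 ≥ 1 and a_n ≥ 0. If m is of Speh type then Σ_{n=0}^N (−1)^{N−n} a_n = 0. -/
/-- The order `≤_b` on segments: by beginning, then by end. -/
def Seg.leB (Δ Δ' : Seg) : Prop := Δ.a < Δ'.a ∨ (Δ.a = Δ'.a ∧ Δ.b ≤ Δ'.b)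

/-!
Weigh each segment by `(-1)` to the power of its beginning. Since `ν` flips this sign, the total
weight of `n + νn` is zero for every `n`; on the other hand the total weight of
`Σ aₙ {νⁿ Δ}` is `±Σ (-1)^(N-n) aₙ`.
-/
def Seg.sign (σ : Seg) : ℤ := σ.a.negOnePow

lemma Seg.sign_nu (σ : Seg) : σ.nu.sign = -σ.sign := by
  simp [Seg.sign, Seg.nu, Int.negOnePow_succ]

lemma Seg.sign_iterate_nu (σ : Seg) (n : ℕ) : (Seg.nu^[n] σ).sign = (-1) ^ n * σ.sign := by
  induction n with
  | zero => simp
  | succ n ih => rw [Function.iterate_succ_apply', Seg.sign_nu, ih, pow_succ]; ring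

lemma SpehType.sum_sign_eq_zero {m : Multiset Seg} (h : SpehType m) :
    (m.map Seg.sign).sum = 0 := by
  obtain ⟨n, rfl⟩ := h
  simp [Multiset.map_map, Seg.sign_nu, Multiset.sum_map_neg]

lemma Multiset.sum_map_sum_nsmul_singleton {ι α M : Type*} [AddCommMonoid M] (s : Finset ι)
    (c : ι → ℕ) (x : ι → α) (f : α → M) :
    ((∑ i ∈ s, c i • ({x i} : Multiset α)).map f).sum = ∑ i ∈ s, c i • f (x i) := by
  rw [← Multiset.mapAddMonoidHom_apply, map_sum, Multiset.sum_sum]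
  simp [Multiset.map_nsmul, Multiset.sum_nsmul]

lemma neg_one_pow_sub_eq_mul {R : Type*} [Monoid R] [HasDistribNeg R] {n N : ℕ} (h : n ≤ N) :
    (-1 : R) ^ (N - n) = (-1) ^ N * (-1) ^ n := by
  conv_rhs => rw [← Nat.sub_add_cancel h, pow_add, mul_assoc, ← pow_add, ← two_mul, pow_mul]
  simp

theorem speh_alternating_sum_general (m : Multiset Seg) (Δ : Seg)
    (N : ℕ) (a : ℕ → ℕ)
    (hsum : m = ∑ n ∈ Finset.range (N + 1), a n • ({Seg.nu^[n] Δ} : Multiset Seg))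
    (hSpeh : SpehType m) :
    ∑ n ∈ Finset.range (N + 1), (-1 : ℤ) ^ (N - n) * (a n : ℤ) = 0 := by
  have hsign : Δ.sign * ∑ n ∈ Finset.range (N + 1), (-1 : ℤ) ^ n * a n = 0 := by
    rw [← hSpeh.sum_sign_eq_zero, hsum, Multiset.sum_map_sum_nsmul_singleton, Finset.mul_sum]
    refine Finset.sum_congr rfl fun n _ => ?_
    rw [Seg.sign_iterate_nu, nsmul_eq_mul]; ring
  have hΔ : Δ.sign ≠ 0 := by simp [Seg.sign]
  calc ∑ n ∈ Finset.range (N + 1), (-1 : ℤ) ^ (N - n) * a n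
      = (-1) ^ N * ∑ n ∈ Finset.range (N + 1), (-1 : ℤ) ^ n * a n := by
        rw [Finset.mul_sum]
        refine Finset.sum_congr rfl fun n hn => ?_
        rw [neg_one_pow_sub_eq_mul (Finset.mem_range_succ_iff.mp hn), mul_assoc]
    _ = 0 := by rw [(mul_eq_zero.mp hsign).resolve_left hΔ, mul_zero]

/-- if all segments of `m` have length `ℓ`, `Δ` is `≤_b`-minimal in `m`, and
`m = Σ_{n=0}^N a_n {ν^n Δ}` with `a_0 ≥ 1`, then Speh type implies
`Σ_{n=0}^N (−1)^{N−n} a_n = 0`. -/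
theorem speh_alternating_sum (ℓ : ℕ) (m : Multiset Seg) (Δ : Seg)
    (hlen : ∀ Δ' ∈ m, Δ'.b - Δ'.a + 1 = (ℓ : ℤ))
    (hmem : Δ ∈ m) (hmin : ∀ Δ' ∈ m, Δ.leB Δ')
    (N : ℕ) (a : ℕ → ℕ) (ha0 : 1 ≤ a 0)
    (hsum : m = ∑ n ∈ Finset.range (N + 1), a n • ({Seg.nu^[n] Δ} : Multiset Seg))
    (hSpeh : SpehType m) :
    ∑ n ∈ Finset.range (N + 1), (-1 : ℤ) ^ (N - n) * (a n : ℤ) = 0 :=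
  speh_alternating_sum_general m Δ N a hsum hSpeh
end

section
/- Let ℓ ∈ ℕ, let m be a multi-set of segments of integers all of length ℓ, with ≤_b-minimal element Δ, and write m = Σ_{n=0}^N a_n {ν^n Δ}. Define b_0 = a_0 and b_n = Σ_{i=0}^n (−1)^{n−i} a_i. If m is of Speh type, then b_n ≥ 0 for all 0 ≤ n ≤ N, b_N = 0, and m = Σ_{n=0}^{N−1} b_n ({ν^n Δ} + {ν^{n+1} Δ}). -/
/-- The partial alternating sums `b_n = Σ_{i=0}^n (−1)^{n−i} a_i`. -/
def altB (a : ℕ → ℕ) (n : ℕ) : ℤ := ∑ i ∈ Finset.range (n + 1), (-1 : ℤ) ^ (n - i) * (a i : ℤ)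

/-!
The multi-set `m` lives on the ray `k ↦ νᵏΔ`, and `ν` moves this ray one step forward, so a
decomposition `m = n + νn` pulls back to `M = T + (T + 1)` for the multi-set `M = Σ aₖ {k}` of
natural numbers. With `cₖ` the multiplicity of `k` in `T`, comparing multiplicities gives
`a₀ = c₀` and `aₖ = cₖ + cₖ₋₁`, hence `bₙ = cₙ ≥ 0`; at `N + 1` it gives `c_N = 0`, so `T` lives
on `{0, …, N - 1}` and `m = Σ_{n<N} cₙ ({νⁿΔ} + {νⁿ⁺¹Δ})`.
-/

section Multiset

variable {α β : Type*}

theorem Multiset.count_sum_nsmul_singleton [DecidableEq α] (s : Finset α) (c : α → ℕ) (x : α) :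
    (∑ i ∈ s, c i • ({i} : Multiset α)).count x = if x ∈ s then c x else 0 := by
  simp only [Multiset.count_sum', Multiset.count_nsmul, Multiset.count_singleton, mul_ite,
    mul_one, mul_zero, Finset.sum_ite_eq]

theorem Multiset.map_sum_nsmul {ι : Type*} (s : Finset ι) (c : ι → ℕ) (u : ι → Multiset α)
    (f : α → β) : (∑ i ∈ s, c i • u i).map f = ∑ i ∈ s, c i • (u i).map f := by
  simpa only [Multiset.coe_mapAddMonoidHom, Multiset.map_nsmul] using
    map_sum (Multiset.mapAddMonoidHom f) (fun i => c i • u i) s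

theorem Multiset.eq_sum_count_nsmul_singleton [DecidableEq α] {T : Multiset α} {s : Finset α}
    (hT : ∀ x ∈ T, x ∈ s) : T = ∑ i ∈ s, T.count i • ({i} : Multiset α) := by
  ext x
  rw [Multiset.count_sum_nsmul_singleton]
  split_ifs with hx
  · rfl
  · exact Multiset.count_eq_zero.mpr fun hxT => hx (hT x hxT)

theorem Multiset.exists_eq_add_map_succ_of_map_eq {f : ℕ → α} {g : α → α}
    (hf : Function.Injective f) (hg : ∀ k, g (f k) = f (k + 1)) {M : Multiset ℕ}
    {t : Multiset α} (h : M.map f = t + t.map g) : ∃ T : Multiset ℕ, M = T + T.map Nat.succ := by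
  obtain ⟨T, rfl⟩ : ∃ T : Multiset ℕ, T.map f = t := by
    refine ⟨t.map (Function.invFun f), ?_⟩
    rw [Multiset.map_map]
    refine (Multiset.map_congr rfl fun x hx => ?_).trans (Multiset.map_id' t)
    obtain ⟨k, -, rfl⟩ := Multiset.mem_map.mp (h ▸ Multiset.mem_add.mpr (Or.inl hx))
    exact Function.invFun_eq ⟨k, rfl⟩
  refine ⟨T, Multiset.map_injective hf ?_⟩
  rw [h, Multiset.map_add, Multiset.map_map, Multiset.map_map]
  exact congrArg _ (Multiset.map_congr rfl fun k _ => hg k)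

end Multiset

theorem altB_succ (a : ℕ → ℕ) (n : ℕ) : altB a (n + 1) = a (n + 1) - altB a n := by
  have hsign : ∀ i ∈ Finset.range (n + 1),
      (-1 : ℤ) ^ (n + 1 - i) * a i = -((-1 : ℤ) ^ (n - i) * a i) := fun i hi => by
    rw [Nat.sub_add_comm (Finset.mem_range_succ_iff.mp hi), pow_succ]
    ring
  rw [altB, Finset.sum_range_succ, Finset.sum_congr rfl hsign, Finset.sum_neg_distrib,
    Nat.sub_self, altB]
  ring

section AddMapSucc

open Multiset

theorem count_succ_add_map_succ (T : Multiset ℕ) (k : ℕ) :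
    (T + T.map Nat.succ).count (k + 1) = T.count (k + 1) + T.count k := by
  rw [count_add, count_map_eq_count' _ _ Nat.succ_injective]

variable {a : ℕ → ℕ} {N : ℕ} {T : Multiset ℕ}
  (hT : ∑ n ∈ Finset.range (N + 1), a n • ({n} : Multiset ℕ) = T + T.map Nat.succ)
include hT

theorem altB_eq_count_of_eq_add_map_succ {n : ℕ} (hn : n ≤ N) : altB a n = T.count n := by
  have hcount (k) (hk : k ≤ N) : a k = (T + T.map Nat.succ).count k := by
    rw [← hT, count_sum_nsmul_singleton, if_pos (Finset.mem_range_succ_iff.mpr hk)]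
  induction n with
  | zero => simp [altB, hcount 0 hn]
  | succ k ih =>
    rw [altB_succ, ih (by omega), hcount _ hn, count_succ_add_map_succ]
    push_cast
    ring

theorem count_top_eq_zero_of_eq_add_map_succ : T.count N = 0 := by
  have h := count_succ_add_map_succ T N
  rw [← hT, count_sum_nsmul_singleton, if_neg (by simp)] at h
  omega

theorem lt_of_mem_of_eq_add_map_succ {n : ℕ} (hn : n ∈ T) : n < N := by
  have hle : n ≤ N := by
    have : n ∈ T + T.map Nat.succ := mem_add.mpr (Or.inl hn)
    rw [← hT] at this
    obtain ⟨i, hi, hni⟩ := mem_sum.mp this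
    rw [mem_singleton.mp (mem_of_mem_nsmul hni)]
    exact Finset.mem_range_succ_iff.mp hi
  refine lt_of_le_of_ne hle fun h => ?_
  subst h
  exact count_ne_zero.mpr hn (count_top_eq_zero_of_eq_add_map_succ hT)

theorem add_map_succ_eq_sum_of_eq_add_map_succ :
    T + T.map Nat.succ = ∑ n ∈ Finset.range N, T.count n • ({n} + {n + 1} : Multiset ℕ) := by
  have hT' : T = ∑ n ∈ Finset.range N, T.count n • ({n} : Multiset ℕ) :=
    eq_sum_count_nsmul_singleton fun n hn =>
      Finset.mem_range.mpr (lt_of_mem_of_eq_add_map_succ hT hn)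
  conv_lhs => rw [hT']
  simp only [map_sum_nsmul, map_singleton, smul_add, Finset.sum_add_distrib]

end AddMapSucc

namespace Seg

theorem a_iterate_nu (Δ : Seg) (k : ℕ) : (nu^[k] Δ).a = Δ.a + k := by
  induction k with
  | zero => simp
  | succ k ih =>
    rw [Function.iterate_succ_apply']
    change (nu^[k] Δ).a + 1 = _
    rw [ih]
    push_cast
    ring

theorem iterate_nu_injective (Δ : Seg) : Function.Injective fun k : ℕ => nu^[k] Δ := by
  intro j k h
  have := congrArg Seg.a h
  simp only [a_iterate_nu] at this
  omega

end Seg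

theorem speh_partial_sums_general (m : Multiset Seg) (Δ : Seg)
    (N : ℕ) (a : ℕ → ℕ)
    (hsum : m = ∑ n ∈ Finset.range (N + 1), a n • ({Seg.nu^[n] Δ} : Multiset Seg))
    (hSpeh : SpehType m) :
    (∀ n ≤ N, 0 ≤ altB a n) ∧ altB a N = 0 ∧
      m = ∑ n ∈ Finset.range N,
        (altB a n).toNat • (({Seg.nu^[n] Δ} + {Seg.nu^[n + 1] Δ}) : Multiset Seg) := by
  have hm : m = (∑ n ∈ Finset.range (N + 1), a n • ({n} : Multiset ℕ)).map (Seg.nu^[·] Δ) := by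
    simp only [hsum, Multiset.map_sum_nsmul, Multiset.map_singleton]
  obtain ⟨t, ht⟩ := hSpeh
  obtain ⟨T, hT⟩ := Multiset.exists_eq_add_map_succ_of_map_eq (Seg.iterate_nu_injective Δ)
    (fun k => (Function.iterate_succ_apply' Seg.nu k Δ).symm) (hm.symm.trans ht)
  have hb {n : ℕ} (hn : n ≤ N) : altB a n = T.count n := altB_eq_count_of_eq_add_map_succ hT hn
  refine ⟨fun n hn => hb hn ▸ Int.natCast_nonneg _, ?_, ?_⟩
  · rw [hb le_rfl, count_top_eq_zero_of_eq_add_map_succ hT, Nat.cast_zero]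
  · rw [hm, hT, add_map_succ_eq_sum_of_eq_add_map_succ hT, Multiset.map_sum_nsmul]
    refine Finset.sum_congr rfl fun n hn => ?_
    rw [hb (Finset.mem_range.mp hn).le, Int.toNat_natCast, Multiset.map_add,
      Multiset.map_singleton, Multiset.map_singleton]

/-- in the setting of a multi-set `m = Σ_{n=0}^N a_n {ν^n Δ}` of segments of
constant length `ℓ` with `≤_b`-minimal element `Δ`, if `m` is of Speh type then
`b_n ≥ 0` for all `n ≤ N`, `b_N = 0`, and `m = Σ_{n=0}^{N−1} b_n ({ν^nΔ} + {ν^{n+1}Δ})`. -/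
theorem speh_partial_sums (ℓ : ℕ) (m : Multiset Seg) (Δ : Seg)
    (hlen : ∀ Δ' ∈ m, Δ'.b - Δ'.a + 1 = (ℓ : ℤ))
    (hmem : Δ ∈ m) (hmin : ∀ Δ' ∈ m, Δ.leB Δ')
    (N : ℕ) (a : ℕ → ℕ) (ha0 : 1 ≤ a 0)
    (hsum : m = ∑ n ∈ Finset.range (N + 1), a n • ({Seg.nu^[n] Δ} : Multiset Seg))
    (hSpeh : SpehType m) :
    (∀ n ≤ N, 0 ≤ altB a n) ∧ altB a N = 0 ∧
      m = ∑ n ∈ Finset.range N,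
        (altB a n).toNat • (({Seg.nu^[n] Δ} + {Seg.nu^[n + 1] Δ}) : Multiset Seg) :=
  speh_partial_sums_general m Δ N a hsum hSpeh
end

section
/- Let m = {Δ_1, ..., Δ_{2m}} be a ladder of segments of integers with Δ_{2i−1} = νΔ_{2i} for all i = 1, ..., m, and write Δ_i = [a_i, b_i]. For 1 ≤ i ≤ 2m−1 such that a_i ≤ b_{i+1} + 1, let m_i be the multi-set obtained from m by replacing the pair {Δ_i, Δ_{i+1}} with {[a_{i+1}, b_i], [a_i, b_{i+1}]} (where [a,a−1] denotes the empty segment, omitted from the multi-set). Then m_i is not of Speh type for any i = 1, ..., 2m−1. -/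
/-- A list of segments is a ladder if beginnings and ends are strictly decreasing. -/
def IsLadder (L : List Seg) : Prop :=
  List.Chain' (fun Δ Δ' : Seg => Δ'.a < Δ.a ∧ Δ'.b < Δ.b) L

/-- The multi-set `{[x,y]}` if `x ≤ y`, empty otherwise (empty segments are omitted). -/
def segMk (x y : ℤ) : Multiset Seg := if h : x ≤ y then {⟨x, y, h⟩} else 0

theorem Multiset.countP_sub_of_forall_not {α : Type*} [DecidableEq α] (p : α → Prop)
    [DecidablePred p] (s t : Multiset α) (ht : ∀ x ∈ t, ¬ p x) :
    (s - t).countP p = s.countP p := by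
  rw [countP_eq_card_filter, countP_eq_card_filter, filter_sub, filter_eq_nil.mpr ht,
    tsub_zero]

def Seg.length (Δ : Seg) : ℤ := Δ.b - Δ.a

@[simp]
theorem Seg.length_nu (Δ : Seg) : Δ.nu.length = Δ.length := by
  simp only [Seg.length, Seg.nu]
  ring

theorem SpehType.even_countP {m : Multiset Seg} (hm : SpehType m) (p : Seg → Prop)
    [DecidablePred p] (hp : ∀ Δ, p Δ.nu ↔ p Δ) : Even (m.countP p) := by
  obtain ⟨n, rfl⟩ := hm
  rw [Multiset.countP_add, Multiset.countP_map, ← Multiset.countP_eq_card_filter]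
  simp only [hp]
  exact ⟨_, rfl⟩

theorem SpehType.even_countP_length {m : Multiset Seg} (hm : SpehType m) (c : ℤ) :
    Even (m.countP fun Δ => Δ.length = c) :=
  hm.even_countP _ fun Δ => by rw [Seg.length_nu]

theorem spehType_cons_cons_nu (Δ : Seg) {m : Multiset Seg} (hm : SpehType m) :
    SpehType (Δ.nu ::ₘ Δ ::ₘ m) := by
  obtain ⟨n, rfl⟩ := hm
  refine ⟨Δ ::ₘ n, ?_⟩
  rw [Multiset.map_cons, Multiset.cons_add, Multiset.add_cons, Multiset.cons_swap]

theorem spehType_coe_of_pairs (mm : ℕ) (L : List Seg) (hlen : L.length = 2 * mm)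
    (hpair : ∀ (j : ℕ) (h : 2 * j + 1 < L.length),
      L.get ⟨2 * j, by omega⟩ = (L.get ⟨2 * j + 1, h⟩).nu) :
    SpehType (L : Multiset Seg) := by
  induction mm generalizing L with
  | zero => exact ⟨0, by simp [List.length_eq_zero_iff.mp hlen]⟩
  | succ mm ih =>
    match L, hlen with
    | x :: y :: L', hlen =>
      have hxy : x = y.nu := hpair 0 (by simp)
      have hpair' : ∀ (j : ℕ) (h : 2 * j + 1 < L'.length),
          L'.get ⟨2 * j, by omega⟩ = (L'.get ⟨2 * j + 1, h⟩).nu := fun j h =>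
        hpair (j + 1) (by simp; omega)
      rw [hxy, ← Multiset.cons_coe, ← Multiset.cons_coe]
      exact spehType_cons_cons_nu y (ih L' (by simp at hlen; omega) hpair')

theorem IsLadder.get_succ_lt {L : List Seg} (hL : IsLadder L) (i : ℕ) (hi : i + 1 < L.length) :
    (L.get ⟨i + 1, hi⟩).a < (L.get ⟨i, by omega⟩).a ∧
      (L.get ⟨i + 1, hi⟩).b < (L.get ⟨i, by omega⟩).b :=
  List.isChain_iff_getElem.mp hL i hi

theorem countP_length_segMk (x y c : ℤ) :
    (segMk x y).countP (fun Δ => Δ.length = c) = if x ≤ y ∧ y - x = c then 1 else 0 := by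
  by_cases hxy : x ≤ y
  · rw [segMk, dif_pos hxy, ← Multiset.cons_zero, Multiset.countP_cons, Multiset.countP_zero,
      zero_add]
    exact if_congr (by simp [Seg.length, hxy]) rfl rfl
  · rw [segMk, dif_neg hxy, Multiset.countP_zero, if_neg fun h => hxy h.1]

/-- let `m = {Δ_1,...,Δ_{2m}}` be a ladder with `Δ_{2i−1} = νΔ_{2i}` (i.e. of
Speh type), `Δ_i = [a_i,b_i]`. For `i` with `a_i ≤ b_{i+1} + 1` (0-indexed below), the
multi-set `m_i` obtained by replacing `{Δ_i, Δ_{i+1}}` with `{[a_{i+1},b_i], [a_i,b_{i+1}]}`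
(empty segments omitted) is not of Speh type. -/
theorem elementary_operation_not_speh (L : List Seg) (hL : IsLadder L)
    (mm : ℕ) (hlen : L.length = 2 * mm)
    (hpair : ∀ (j : ℕ) (h : 2 * j + 1 < L.length),
      L.get ⟨2 * j, by omega⟩ = (L.get ⟨2 * j + 1, h⟩).nu)
    (i : ℕ) (hi : i + 1 < L.length) :
    ¬ SpehType ((↑L : Multiset Seg)
        - {L.get ⟨i, by omega⟩, L.get ⟨i + 1, hi⟩}
        + segMk (L.get ⟨i + 1, hi⟩).a (L.get ⟨i, by omega⟩).b
        + segMk (L.get ⟨i, by omega⟩).a (L.get ⟨i + 1, hi⟩).b) := by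
  intro hs
  set Δ := L.get ⟨i, by omega⟩
  set Δ' := L.get ⟨i + 1, hi⟩
  have hstep : Δ'.a < Δ.a ∧ Δ'.b < Δ.b := hL.get_succ_lt i hi
  have hΔ := Δ.le
  have hremoved : ∀ Γ ∈ ({Δ, Δ'} : Multiset Seg), ¬ Γ.length = Δ.b - Δ'.a := by
    simp only [Multiset.insert_eq_cons, Multiset.mem_cons, Multiset.mem_singleton]
    rintro Γ (rfl | rfl) <;> simp only [Seg.length] <;> omega
  have hL_even := (spehType_coe_of_pairs mm L hlen hpair).even_countP_length (Δ.b - Δ'.a)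
  have hs_even := hs.even_countP_length (Δ.b - Δ'.a)
  rw [Multiset.countP_add, Multiset.countP_add, Multiset.countP_sub_of_forall_not _ _ _
    hremoved, countP_length_segMk, countP_length_segMk, if_pos (by omega),
    if_neg (by omega), add_zero] at hs_even
  exact Nat.not_even_iff_odd.mpr hL_even.add_one hs_even
end
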